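/- Define vol(u,v) piecewise for u∈[0,1]: vol = u^2 - v^2 - 8u - 2v + 10 if v∈[0,2-2u]; vol = 12 - 4v - 12u - v^2/2 + 2uv + 3u^2 if v∈[2-2u,2-u]; vol = (1/2)(4u+3v-8)^2 if v∈[2-u,(8-4u)/3]; and for u∈[1,2]: vol = 12 - 4v - 12u - v^2/2 + 2uv + 3u^2 if v∈[0,2-u]; vol = (1/2)(4u+3v-8)^2 if v∈[2-u,(8-4u)/3]; 0 otherwise. Then (3/22) ∫_0^2 ∫_0^∞ vol(u,v) dv du = 65/66. -/

import Mathlib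

open MeasureTheory intervalIntegral

noncomputable def vol18 (u v : ℝ) : ℝ :=
  if 0 ≤ u ∧ u ≤ 1 then
    (if 0 ≤ v ∧ v ≤ 2 - 2*u then u^2 - v^2 - 8*u - 2*v + 10
     else if 2 - 2*u ≤ v ∧ v ≤ 2 - u then 12 - 4*v - 12*u - v^2/2 + 2*u*v + 3*u^2
     else if 2 - u ≤ v ∧ v ≤ (8 - 4*u)/3 then (1/2)*(4*u + 3*v - 8)^2
     else 0)
  else if 1 ≤ u ∧ u ≤ 2 then
    (if 0 ≤ v ∧ v ≤ 2 - u then 12 - 4*v - 12*u - v^2/2 + 2*u*v + 3*u^2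
     else if 2 - u ≤ v ∧ v ≤ (8 - 4*u)/3 then (1/2)*(4*u + 3*v - 8)^2
     else 0)
  else 0

/-! For fixed `u`, `vol18 u` is piecewise quadratic in `v` and vanishes beyond `(8 - 4u)/3`, so
its integral over `v > 0` is a cubic polynomial in `u` on `[0, 1]` and another one on `[1, 2]`
(both equal to `17/9` at `u = 1`). Integrating these cubics gives `65/9`. -/

open Set Interval

lemma integral_cubic (c₀ c₁ c₂ c₃ a b : ℝ) :
    ∫ x in a..b, (c₀ + c₁ * x + c₂ * x ^ 2 + c₃ * x ^ 3) =
      (c₀ * b + c₁ / 2 * b ^ 2 + c₂ / 3 * b ^ 3 + c₃ / 4 * b ^ 4) -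
        (c₀ * a + c₁ / 2 * a ^ 2 + c₂ / 3 * a ^ 3 + c₃ / 4 * a ^ 4) := by
  refine integral_eq_sub_of_hasDerivAt
    (f := fun x => c₀ * x + c₁ / 2 * x ^ 2 + c₂ / 3 * x ^ 3 + c₃ / 4 * x ^ 4) (fun x _ => ?_)
    ((by fun_prop : Continuous fun x : ℝ => c₀ + c₁ * x + c₂ * x ^ 2 + c₃ * x ^ 3).intervalIntegrable a b)
  convert ((((hasDerivAt_id x).const_mul c₀).add ((hasDerivAt_pow 2 x).const_mul (c₁ / 2))).add
    ((hasDerivAt_pow 3 x).const_mul (c₂ / 3))).add ((hasDerivAt_pow 4 x).const_mul (c₃ / 4)) using 1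
  · rfl
  · push_cast; ring

lemma integral_quadratic (c₀ c₁ c₂ a b : ℝ) :
    ∫ x in a..b, (c₀ + c₁ * x + c₂ * x ^ 2) =
      (c₀ * b + c₁ / 2 * b ^ 2 + c₂ / 3 * b ^ 3) - (c₀ * a + c₁ / 2 * a ^ 2 + c₂ / 3 * a ^ 3) := by
  simpa using integral_cubic c₀ c₁ c₂ 0 a b

section Piecewise

variable {f g₁ g₂ g₃ : ℝ → ℝ} {a b c d : ℝ}

lemma setIntegral_Ioi_eq_integral_of_eqOn_zero (hac : a ≤ c) (hf : EqOn f 0 (Ioi c)) :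
    ∫ x in Ioi a, f x = ∫ x in a..c, f x := by
  have hf' : EqOn f ((Ioc a c).indicator f) (Ioi a) := fun x hx => by
    by_cases hxc : x ≤ c
    · rw [indicator_of_mem (show x ∈ Ioc a c from ⟨hx, hxc⟩)]
    · rw [indicator_of_notMem (fun h => hxc h.2), hf (not_le.1 hxc), Pi.zero_apply]
  rw [setIntegral_congr_fun measurableSet_Ioi hf', setIntegral_indicator measurableSet_Ioc,
    inter_eq_right.2 Ioc_subset_Ioi_self, integral_of_le hac]

lemma integral_eq_add_of_eqOn (hg₁ : Continuous g₁) (hg₂ : Continuous g₂)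
    (h₁ : EqOn f g₁ (Ι a b)) (h₂ : EqOn f g₂ (Ι b c)) :
    ∫ x in a..c, f x = (∫ x in a..b, g₁ x) + ∫ x in b..c, g₂ x := by
  rw [← integral_add_adjacent_intervals ((hg₁.intervalIntegrable a b).congr h₁.symm)
      ((hg₂.intervalIntegrable b c).congr h₂.symm),
    integral_congr_ae (ae_of_all _ h₁), integral_congr_ae (ae_of_all _ h₂)]

lemma integral_eq_add_add_of_eqOn (hg₁ : Continuous g₁) (hg₂ : Continuous g₂)
    (hg₃ : Continuous g₃) (h₁ : EqOn f g₁ (Ι a b)) (h₂ : EqOn f g₂ (Ι b c))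
    (h₃ : EqOn f g₃ (Ι c d)) :
    ∫ x in a..d, f x = (∫ x in a..b, g₁ x) + (∫ x in b..c, g₂ x) + ∫ x in c..d, g₃ x := by
  have i₁ := (hg₁.intervalIntegrable (μ := volume) a b).congr h₁.symm
  have i₂ := (hg₂.intervalIntegrable (μ := volume) b c).congr h₂.symm
  rw [← integral_add_adjacent_intervals (i₁.trans i₂) ((hg₃.intervalIntegrable c d).congr h₃.symm),
    ← integral_add_adjacent_intervals i₁ i₂, integral_congr_ae (ae_of_all _ h₁),
    integral_congr_ae (ae_of_all _ h₂), integral_congr_ae (ae_of_all _ h₃)]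

end Piecewise

lemma integral_vol18_of_le_one {u : ℝ} (hu₀ : 0 ≤ u) (hu₁ : u ≤ 1) :
    ∫ v in Ioi 0, vol18 u v = 124/9 + (-56/3) * u + 22/3 * u^2 + (-5/9) * u^3 := by
  have hu : 0 ≤ u ∧ u ≤ 1 := ⟨hu₀, hu₁⟩
  have h₁ : EqOn (vol18 u) (fun v => (u^2 - 8*u + 10) + (-2) * v + (-1) * v^2)
      (Ι 0 (2 - 2*u)) := fun v hv => by
    rw [uIoc_of_le (by linarith)] at hv
    rw [vol18, if_pos hu, if_pos ⟨hv.1.le, hv.2⟩]; ring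
  have h₂ : EqOn (vol18 u) (fun v => (12 - 12*u + 3*u^2) + (2*u - 4) * v + (-1/2) * v^2)
      (Ι (2 - 2*u) (2 - u)) := fun v hv => by
    rw [uIoc_of_le (by linarith)] at hv
    rw [vol18, if_pos hu, if_neg (fun h => by linarith [h.2, hv.1]), if_pos ⟨hv.1.le, hv.2⟩]; ring
  have h₃ : EqOn (vol18 u) (fun v => (8*u^2 - 32*u + 32) + (12*u - 24) * v + 9/2 * v^2)
      (Ι (2 - u) ((8 - 4*u)/3)) := fun v hv => by
    rw [uIoc_of_le (by linarith)] at hv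
    rw [vol18, if_pos hu, if_neg (fun h => by linarith [h.2, hv.1]),
      if_neg (fun h => by linarith [h.2, hv.1]), if_pos ⟨hv.1.le, hv.2⟩]; ring
  have h₀ : EqOn (vol18 u) 0 (Ioi ((8 - 4*u)/3)) := fun v (hv : _ < v) => by
    rw [vol18, if_pos hu, if_neg (fun h => by linarith [h.2]), if_neg (fun h => by linarith [h.2]),
      if_neg (fun h => by linarith [h.2]), Pi.zero_apply]
  rw [setIntegral_Ioi_eq_integral_of_eqOn_zero (by linarith) h₀,
    integral_eq_add_add_of_eqOn (by fun_prop) (by fun_prop) (by fun_prop) h₁ h₂ h₃,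
    integral_quadratic, integral_quadratic, integral_quadratic]
  ring

lemma integral_vol18_of_one_lt {u : ℝ} (hu₁ : 1 < u) (hu₂ : u ≤ 2) :
    ∫ v in Ioi 0, vol18 u v = 136/9 + (-68/3) * u + 34/3 * u^2 + (-17/9) * u^3 := by
  have hu₀ : ¬ (0 ≤ u ∧ u ≤ 1) := fun h => by linarith [h.2]
  have hu : 1 ≤ u ∧ u ≤ 2 := ⟨hu₁.le, hu₂⟩
  have h₁ : EqOn (vol18 u) (fun v => (12 - 12*u + 3*u^2) + (2*u - 4) * v + (-1/2) * v^2)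
      (Ι 0 (2 - u)) := fun v hv => by
    rw [uIoc_of_le (by linarith)] at hv
    rw [vol18, if_neg hu₀, if_pos hu, if_pos ⟨hv.1.le, hv.2⟩]; ring
  have h₂ : EqOn (vol18 u) (fun v => (8*u^2 - 32*u + 32) + (12*u - 24) * v + 9/2 * v^2)
      (Ι (2 - u) ((8 - 4*u)/3)) := fun v hv => by
    rw [uIoc_of_le (by linarith)] at hv
    rw [vol18, if_neg hu₀, if_pos hu, if_neg (fun h => by linarith [h.2, hv.1]),
      if_pos ⟨hv.1.le, hv.2⟩]; ring
  have h₀ : EqOn (vol18 u) 0 (Ioi ((8 - 4*u)/3)) := fun v (hv : _ < v) => by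
    rw [vol18, if_neg hu₀, if_pos hu, if_neg (fun h => by linarith [h.2]),
      if_neg (fun h => by linarith [h.2]), Pi.zero_apply]
  rw [setIntegral_Ioi_eq_integral_of_eqOn_zero (by linarith) h₀,
    integral_eq_add_of_eqOn (by fun_prop) (by fun_prop) h₁ h₂,
    integral_quadratic, integral_quadratic]
  ring

theorem stmt_18 :
    (3/22 : ℝ) * ∫ u in (0:ℝ)..2, ∫ v in Set.Ioi (0:ℝ), vol18 u v = 65/66 := by
  have h₁ : EqOn (fun u => ∫ v in Ioi 0, vol18 u v)
      (fun u => 124/9 + (-56/3) * u + 22/3 * u^2 + (-5/9) * u^3) (Ι 0 1) := fun u hu => by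
    rw [uIoc_of_le zero_le_one] at hu
    exact integral_vol18_of_le_one hu.1.le hu.2
  have h₂ : EqOn (fun u => ∫ v in Ioi 0, vol18 u v)
      (fun u => 136/9 + (-68/3) * u + 34/3 * u^2 + (-17/9) * u^3) (Ι 1 2) := fun u hu => by
    rw [uIoc_of_le one_le_two] at hu
    exact integral_vol18_of_one_lt hu.1 hu.2
  rw [integral_eq_add_of_eqOn (by fun_prop) (by fun_prop) h₁ h₂, integral_cubic, integral_cubic]
  norm_num
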